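/- Let L_1, L_2, L_3 ∈ ℝ with ∑_k L_k² ≤ j². The operator ρ_fix = 𝟙/(2j+1) + ∑_k a_k L_k^{(j)} with a_k = L_k / tr((L_k^{(j)})²) is positive semidefinite if and only if ∑_k L_k² ≤ (j+1)²/9. (In particular, for spins j ≥ 1 the naive linear reconstruction can fail to be positive even when the moments are quantum mechanical.) -/

import Mathlib

open Matrix
open scoped ComplexOrder

/-!
Write `v = r n` with `n` a unit vector, so that `ρ_fix = (2j+1)⁻¹ + (r / t) (n · L)` with
`t = j (j+1) (2j+1) / 3`. Completing `n` to a right-handed orthonormal frame `(e, f, n)` gives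
another spin triple `(e · L, f · L, n · L)`, hence a raising operator `B = e · L + i f · L` for
`A = n · L`: `BᴴB = j(j+1) - A² - A`, `BBᴴ = j(j+1) - A² + A` and `[A, B] = B`. Positivity of
`BᴴB` and `BBᴴ` on eigenvectors confines the spectrum of `A` to `[-j, j]`, and lowering any
eigenvector with `Bᴴ` until it vanishes produces the eigenvalue `-j`. Hence `ρ_fix ≥ 0` iff
`(2j+1)⁻¹ ≥ r j / t`, i.e. `3 r ≤ j + 1`.
-/

def leviCivita : Fin 3 → Fin 3 → Fin 3 → ℤ := fun k l m =>
  if (k, l, m) = (0, 1, 2) ∨ (k, l, m) = (1, 2, 0) ∨ (k, l, m) = (2, 0, 1) then 1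
  else if (k, l, m) = (0, 2, 1) ∨ (k, l, m) = (2, 1, 0) ∨ (k, l, m) = (1, 0, 2) then -1
  else 0

variable {ι : Type*}

section PosSemidef

variable [Fintype ι]

theorem Matrix.PosSemidef.nonneg_of_mulVec_eq_smul {M : Matrix ι ι ℂ} (hM : M.PosSemidef)
    {μ : ℝ} {w : ι → ℂ} (hw : w ≠ 0) (h : M *ᵥ w = (μ : ℂ) • w) : 0 ≤ μ := by
  have hq := hM.dotProduct_mulVec_nonneg w
  have hp : 0 < star w ⬝ᵥ w := dotProduct_star_self_pos_iff.mpr hw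
  rw [h, dotProduct_smul, smul_eq_mul,
    Complex.eq_re_of_ofReal_le (r := 0) (z := star w ⬝ᵥ w) (by simp [hp.le]),
    ← Complex.ofReal_mul, Complex.zero_le_real] at hq
  exact nonneg_of_mul_nonneg_left hq (Complex.pos_iff.mp hp).1

variable [DecidableEq ι]

theorem Matrix.IsHermitian.posSemidef_of_eigen_nonneg {M : Matrix ι ι ℂ} (hM : M.IsHermitian)
    (h : ∀ (μ : ℝ) (w : ι → ℂ), w ≠ 0 → M *ᵥ w = (μ : ℂ) • w → 0 ≤ μ) : M.PosSemidef := by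
  refine hM.posSemidef_iff_eigenvalues_nonneg.mpr fun i => h _ (hM.eigenvectorBasis i) ?_ ?_
  · simpa using hM.eigenvectorBasis.orthonormal.ne_zero i
  · rw [hM.mulVec_eigenvectorBasis i]
    exact RCLike.real_smul_eq_coe_smul _ _

theorem Matrix.IsHermitian.exists_eigenvector [Nonempty ι] {A : Matrix ι ι ℂ}
    (hA : A.IsHermitian) : ∃ (μ : ℝ) (w : ι → ℂ), w ≠ 0 ∧ A *ᵥ w = (μ : ℂ) • w := by
  obtain ⟨i⟩ := ‹Nonempty ι›
  refine ⟨hA.eigenvalues i, hA.eigenvectorBasis i, ?_, ?_⟩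
  · simpa using hA.eigenvectorBasis.orthonormal.ne_zero i
  · rw [hA.mulVec_eigenvectorBasis i]
    exact RCLike.real_smul_eq_coe_smul _ _

theorem posSemidef_smul_one_add_smul_iff {A : Matrix ι ι ℂ} {m : ℝ}
    (hA : (A + (m : ℂ) • 1).PosSemidef) {w : ι → ℂ} (hw : w ≠ 0) (hAw : A *ᵥ w = -(m : ℂ) • w)
    {a s : ℝ} (hs : 0 ≤ s) :
    ((a : ℂ) • 1 + (s : ℂ) • A).PosSemidef ↔ 0 ≤ a - s * m := by
  constructor
  · intro h
    refine h.nonneg_of_mulVec_eq_smul hw ?_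
    rw [add_mulVec, smul_mulVec, one_mulVec, smul_mulVec, hAw]
    push_cast
    module
  · intro h
    have hsplit : (a : ℂ) • (1 : Matrix ι ι ℂ) + (s : ℂ) • A
        = ((a - s * m : ℝ) : ℂ) • 1 + (s : ℂ) • (A + (m : ℂ) • 1) := by
      push_cast
      module
    rw [hsplit]
    exact (PosSemidef.one.smul (Complex.zero_le_real.mpr h)).add
      (hA.smul (Complex.zero_le_real.mpr hs))

theorem mulVec_smul_one_sub_mul_self_add_of_mulVec_eq {A : Matrix ι ι ℂ} {μ : ℝ} {w : ι → ℂ}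
    (hAw : A *ᵥ w = (μ : ℂ) • w) (c s : ℝ) :
    ((c : ℂ) • 1 - A * A + (s : ℂ) • A) *ᵥ w = ((c - μ ^ 2 + s * μ : ℝ) : ℂ) • w := by
  rw [add_mulVec, sub_mulVec, ← mulVec_mulVec, smul_mulVec, smul_mulVec, one_mulVec, hAw,
    mulVec_smul, hAw]
  push_cast
  module

end PosSemidef

section RaisingOp

variable [Fintype ι] [DecidableEq ι]

/-- `c` stands for the Casimir `j (j + 1)`. -/
structure IsRaisingOp (A B : Matrix ι ι ℂ) (c : ℝ) : Prop where
  conjTranspose_mul_self : Bᴴ * B = (c : ℂ) • 1 - A * A - A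
  mul_conjTranspose_self : B * Bᴴ = (c : ℂ) • 1 - A * A + A
  commutator : A * B - B * A = B

theorem isRaisingOp_of_commutators {X Y A : Matrix ι ι ℂ} {c : ℝ}
    (hX : X.IsHermitian) (hY : Y.IsHermitian)
    (hXY : X * Y - Y * X = Complex.I • A) (hYA : Y * A - A * Y = Complex.I • X)
    (hAX : A * X - X * A = Complex.I • Y) (hcas : X * X + Y * Y + A * A = (c : ℂ) • 1) :
    IsRaisingOp A (X + Complex.I • Y) c := by
  have hI : Complex.I * Complex.I = -1 := Complex.I_mul_I
  have hB : (X + Complex.I • Y)ᴴ = X - Complex.I • Y := by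
    rw [conjTranspose_add, conjTranspose_smul, hX.eq, hY.eq, Complex.star_def, Complex.conj_I,
      neg_smul, sub_eq_add_neg]
  refine ⟨?_, ?_, ?_⟩
  · rw [hB]
    simp only [mul_add, sub_mul, smul_mul_assoc, mul_smul_comm]
    linear_combination (norm := module) hcas + Complex.I • hXY + hI • A - hI • (Y * Y)
  · rw [hB]
    simp only [add_mul, mul_sub, smul_mul_assoc, mul_smul_comm]
    linear_combination (norm := module) hcas - Complex.I • hXY - hI • A - hI • (Y * Y)
  · simp only [mul_add, add_mul, smul_mul_assoc, mul_smul_comm]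
    linear_combination (norm := module) hAX - Complex.I • hYA - hI • X

namespace IsRaisingOp

variable {A B : Matrix ι ι ℂ} {c : ℝ} {μ : ℝ} {w : ι → ℂ}

theorem sq_add_le (h : IsRaisingOp A B c) (hw : w ≠ 0) (hAw : A *ᵥ w = (μ : ℂ) • w) :
    μ ^ 2 + μ ≤ c := by
  have hBB : Bᴴ * B = (c : ℂ) • 1 - A * A + ((-1 : ℝ) : ℂ) • A := by
    rw [h.conjTranspose_mul_self]; push_cast; module
  have := (posSemidef_conjTranspose_mul_self B).nonneg_of_mulVec_eq_smul hw
    (hBB ▸ mulVec_smul_one_sub_mul_self_add_of_mulVec_eq hAw c (-1))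
  linarith

theorem sq_sub_le (h : IsRaisingOp A B c) (hw : w ≠ 0) (hAw : A *ᵥ w = (μ : ℂ) • w) :
    μ ^ 2 - μ ≤ c := by
  have hBB : B * Bᴴ = (c : ℂ) • 1 - A * A + ((1 : ℝ) : ℂ) • A := by
    rw [h.mul_conjTranspose_self]; push_cast; module
  have := (posSemidef_self_mul_conjTranspose B).nonneg_of_mulVec_eq_smul hw
    (hBB ▸ mulVec_smul_one_sub_mul_self_add_of_mulVec_eq hAw c 1)
  linarith

variable {j : ℝ}

theorem neg_le_and_le (h : IsRaisingOp A B (j * (j + 1))) (hj : 0 ≤ j) (hw : w ≠ 0)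
    (hAw : A *ᵥ w = (μ : ℂ) • w) : -j ≤ μ ∧ μ ≤ j := by
  have h₁ := h.sq_add_le hw hAw
  have h₂ := h.sq_sub_le hw hAw
  constructor <;> nlinarith

theorem mulVec_conjTranspose_mulVec (h : IsRaisingOp A B c) (hA : A.IsHermitian)
    (hAw : A *ᵥ w = (μ : ℂ) • w) :
    A *ᵥ (Bᴴ *ᵥ w) = ((μ - 1 : ℝ) : ℂ) • (Bᴴ *ᵥ w) := by
  have hlower : A * Bᴴ = Bᴴ * A - Bᴴ := by
    have := congrArg conjTranspose h.commutator
    rw [conjTranspose_sub, conjTranspose_mul, conjTranspose_mul, hA.eq] at this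
    exact eq_sub_of_add_eq (sub_eq_iff_eq_add'.mp this).symm
  rw [mulVec_mulVec, hlower, sub_mulVec, ← mulVec_mulVec, hAw, mulVec_smul]
  push_cast
  module

theorem eq_neg_of_conjTranspose_mulVec_eq_zero (h : IsRaisingOp A B (j * (j + 1))) (hj : 0 ≤ j)
    (hw : w ≠ 0) (hAw : A *ᵥ w = (μ : ℂ) • w) (hBw : Bᴴ *ᵥ w = 0) : μ = -j := by
  have hBB : B * Bᴴ = ((j * (j + 1) : ℝ) : ℂ) • 1 - A * A + ((1 : ℝ) : ℂ) • A := by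
    rw [h.mul_conjTranspose_self]; push_cast; module
  have hzero := mulVec_smul_one_sub_mul_self_add_of_mulVec_eq hAw (j * (j + 1)) 1
  rw [← hBB, ← mulVec_mulVec, hBw, mulVec_zero, eq_comm, smul_eq_zero] at hzero
  have hμ : j * (j + 1) - μ ^ 2 + 1 * μ = 0 := by exact_mod_cast hzero.resolve_right hw
  have := (h.neg_le_and_le hj hw hAw).2
  nlinarith

theorem exists_mulVec_eq_neg (h : IsRaisingOp A B (j * (j + 1))) (hA : A.IsHermitian)
    (hj : 0 ≤ j) (hw : w ≠ 0) (hAw : A *ᵥ w = (μ : ℂ) • w) :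
    ∃ w' : ι → ℂ, w' ≠ 0 ∧ A *ᵥ w' = -(j : ℂ) • w' := by
  -- lowering with `Bᴴ` must stop, and it can only stop at `-j`
  suffices ∀ k : ℕ, ∀ (μ : ℝ) (w : ι → ℂ), w ≠ 0 → A *ᵥ w = (μ : ℂ) • w → μ + j < k →
      ∃ w' : ι → ℂ, w' ≠ 0 ∧ A *ᵥ w' = -(j : ℂ) • w' from
    this (⌈μ + j⌉₊ + 1) μ w hw hAw (by push_cast; linarith [Nat.le_ceil (μ + j)])
  intro k
  induction k with
  | zero =>
    intro μ w hw hAw hk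
    push_cast at hk
    linarith [(h.neg_le_and_le hj hw hAw).1]
  | succ k ih =>
    intro μ w hw hAw hk
    by_cases hBw : Bᴴ *ᵥ w = 0
    · refine ⟨w, hw, ?_⟩
      rw [hAw, h.eq_neg_of_conjTranspose_mulVec_eq_zero hj hw hAw hBw]
      push_cast; rfl
    · exact ih (μ - 1) _ hBw (h.mulVec_conjTranspose_mulVec hA hAw) (by push_cast at hk; linarith)

theorem posSemidef_add_smul_one (h : IsRaisingOp A B (j * (j + 1))) (hA : A.IsHermitian)
    (hj : 0 ≤ j) : (A + (j : ℂ) • 1).PosSemidef := by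
  have hHerm := hA.add (isHermitian_one.smul (Complex.conj_ofReal j))
  refine hHerm.posSemidef_of_eigen_nonneg fun ν w hw hνw => ?_
  have hAw : A *ᵥ w = ((ν - j : ℝ) : ℂ) • w := by
    rw [add_mulVec, smul_mulVec, one_mulVec] at hνw
    rw [eq_sub_of_add_eq hνw]
    push_cast
    module
  linarith [(h.neg_le_and_le hj hw hAw).1]

end IsRaisingOp

end RaisingOp

section SpinComponents

variable {m : Type*} [Fintype m]

def spinAlong (L : m → Matrix ι ι ℂ) (a : m → ℝ) : Matrix ι ι ℂ := ∑ k, (a k : ℂ) • L k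

theorem isHermitian_spinAlong {L : m → Matrix ι ι ℂ} (herm : ∀ k, (L k).IsHermitian)
    (a : m → ℝ) : (spinAlong L a).IsHermitian :=
  isSelfAdjoint_sum _ fun k _ => (herm k).smul (Complex.conj_ofReal (a k))

variable [Fintype ι]

theorem sum_spinAlong_mul_self [DecidableEq m] (L : m → Matrix ι ι ℂ) {O : Matrix m m ℝ}
    (hO : Oᵀ * O = 1) : ∑ i, spinAlong L (O i) * spinAlong L (O i) = ∑ k, L k * L k := by
  have hcol : ∀ k l, ∑ i, O i k * O i l = if k = l then 1 else 0 := fun k l => by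
    simpa [mul_apply, one_apply] using congrFun (congrFun hO k) l
  simp only [spinAlong, Finset.sum_mul_sum, smul_mul_smul_comm]
  rw [Finset.sum_comm]
  refine Finset.sum_congr rfl fun k _ => ?_
  rw [Finset.sum_comm]
  simp only [← Finset.sum_smul, ← Complex.ofReal_mul, ← Complex.ofReal_sum, hcol]
  simp

theorem spinAlong_commutator {L : Fin 3 → Matrix ι ι ℂ}
    (comm : ∀ k l, L k * L l - L l * L k = Complex.I • ∑ m, (leviCivita k l m : ℂ) • L m)
    (a b : Fin 3 → ℝ) :
    spinAlong L a * spinAlong L b - spinAlong L b * spinAlong L a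
      = Complex.I • spinAlong L (a ⨯₃ b) := by
  have hexp : spinAlong L a * spinAlong L b - spinAlong L b * spinAlong L a
      = ∑ k, ∑ l, ((a k : ℂ) * b l) • (L k * L l - L l * L k) := by
    simp only [spinAlong, Finset.sum_mul_sum, smul_mul_smul_comm, smul_sub, Finset.sum_sub_distrib]
    congr 1
    rw [Finset.sum_comm]
    simp only [mul_comm]
  rw [hexp]
  simp only [comm, spinAlong, Fin.sum_univ_three, cross_apply, leviCivita]
  simp
  module

end SpinComponents

theorem exists_dotProduct_self_eq_one_and_eq_sqrt_smul (v : Fin 3 → ℝ) :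
    ∃ n : Fin 3 → ℝ, n ⬝ᵥ n = 1 ∧ v = √(v ⬝ᵥ v) • n := by
  by_cases hv : v = 0
  · exact ⟨Pi.single 0 1, by simp, by simp [hv]⟩
  · have hvv : 0 < v ⬝ᵥ v := by simpa using dotProduct_self_star_pos_iff.mpr hv
    have hpos : 0 < √(v ⬝ᵥ v) := Real.sqrt_pos.mpr hvv
    refine ⟨(√(v ⬝ᵥ v))⁻¹ • v, ?_, ?_⟩
    · rw [dotProduct_smul, smul_dotProduct, smul_eq_mul, smul_eq_mul, ← mul_assoc, ← sq,
        inv_pow, Real.sq_sqrt hvv.le, inv_mul_cancel₀ hvv.ne']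
    · rw [smul_smul, mul_inv_cancel₀ hpos.ne', one_smul]

theorem exists_dotProduct_self_eq_one_and_dotProduct_eq_zero (n : Fin 3 → ℝ) :
    ∃ e : Fin 3 → ℝ, e ⬝ᵥ e = 1 ∧ e ⬝ᵥ n = 0 := by
  by_cases hn : n 0 = 0 ∧ n 1 = 0
  · exact ⟨Pi.single 0 1, by simp, by simp [hn.1]⟩
  · set u : Fin 3 → ℝ := ![-n 1, n 0, 0]
    have hu : u ≠ 0 := fun h =>
      hn ⟨by simpa [u] using congrFun h 1, by simpa [u] using congrFun h 0⟩
    have hun : u ⬝ᵥ n = 0 := by simp [u, dotProduct, Fin.sum_univ_three]; ring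
    obtain ⟨e, he, hue⟩ := exists_dotProduct_self_eq_one_and_eq_sqrt_smul u
    refine ⟨e, he, ?_⟩
    have huu : 0 < u ⬝ᵥ u := by simpa using dotProduct_self_star_pos_iff.mpr hu
    rw [hue, smul_dotProduct, smul_eq_mul, mul_eq_zero] at hun
    exact hun.resolve_left (Real.sqrt_ne_zero'.mpr huu)

theorem exists_rightHanded_orthonormal_frame {n : Fin 3 → ℝ} (hn : n ⬝ᵥ n = 1) :
    ∃ e f : Fin 3 → ℝ, e ⨯₃ f = n ∧ f ⨯₃ n = e ∧ n ⨯₃ e = f ∧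
      (Matrix.of ![e, f, n])ᵀ * Matrix.of ![e, f, n] = 1 := by
  obtain ⟨e, he, hen⟩ := exists_dotProduct_self_eq_one_and_dotProduct_eq_zero n
  have hne : n ⬝ᵥ e = 0 := by rw [dotProduct_comm, hen]
  refine ⟨e, n ⨯₃ e, ?_, ?_, rfl, ?_⟩
  · rw [cross_cross_eq_smul_sub_smul', he, hne, one_smul, zero_smul, sub_zero]
  · rw [cross_cross_eq_smul_sub_smul, hn, hen, one_smul, zero_smul, sub_zero]
  · rw [mul_eq_one_comm]
    ext i k
    change ![e, n ⨯₃ e, n] i ⬝ᵥ ![e, n ⨯₃ e, n] k = (1 : Matrix (Fin 3) (Fin 3) ℝ) i k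
    fin_cases i <;> fin_cases k <;>
      simp [he, hn, hen, hne, cross_dot_cross, dot_self_cross, dot_cross_self, dotProduct_comm]

section SpinSpectrum

variable [Fintype ι] [DecidableEq ι] {L : Fin 3 → Matrix ι ι ℂ}

theorem exists_isRaisingOp_spinAlong (herm : ∀ k, (L k).IsHermitian)
    (comm : ∀ k l, L k * L l - L l * L k = Complex.I • ∑ m, (leviCivita k l m : ℂ) • L m)
    {c : ℝ} (casimir : ∑ k, L k * L k = (c : ℂ) • 1) {n : Fin 3 → ℝ} (hn : n ⬝ᵥ n = 1) :
    ∃ B, IsRaisingOp (spinAlong L n) B c := by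
  obtain ⟨e, f, hef, hfn, hne, horth⟩ := exists_rightHanded_orthonormal_frame hn
  refine ⟨_, isRaisingOp_of_commutators (isHermitian_spinAlong herm e)
    (isHermitian_spinAlong herm f) ?_ ?_ ?_ ?_⟩
  · rw [spinAlong_commutator comm, hef]
  · rw [spinAlong_commutator comm, hfn]
  · rw [spinAlong_commutator comm, hne]
  · have h := sum_spinAlong_mul_self L horth
    rwa [Fin.sum_univ_three, casimir] at h

variable {j : ℝ}

theorem posSemidef_spinAlong_add_smul_one (herm : ∀ k, (L k).IsHermitian)
    (comm : ∀ k l, L k * L l - L l * L k = Complex.I • ∑ m, (leviCivita k l m : ℂ) • L m)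
    (hj : 0 ≤ j) (casimir : ∑ k, L k * L k = ((j * (j + 1) : ℝ) : ℂ) • 1)
    {n : Fin 3 → ℝ} (hn : n ⬝ᵥ n = 1) : (spinAlong L n + (j : ℂ) • 1).PosSemidef := by
  obtain ⟨B, hB⟩ := exists_isRaisingOp_spinAlong herm comm casimir hn
  exact hB.posSemidef_add_smul_one (isHermitian_spinAlong herm n) hj

theorem exists_spinAlong_mulVec_eq_neg [Nonempty ι] (herm : ∀ k, (L k).IsHermitian)
    (comm : ∀ k l, L k * L l - L l * L k = Complex.I • ∑ m, (leviCivita k l m : ℂ) • L m)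
    (hj : 0 ≤ j) (casimir : ∑ k, L k * L k = ((j * (j + 1) : ℝ) : ℂ) • 1)
    {n : Fin 3 → ℝ} (hn : n ⬝ᵥ n = 1) : ∃ w, w ≠ 0 ∧ spinAlong L n *ᵥ w = -(j : ℂ) • w := by
  obtain ⟨B, hB⟩ := exists_isRaisingOp_spinAlong herm comm casimir hn
  have hA := isHermitian_spinAlong herm n
  obtain ⟨μ, w, hw, hAw⟩ := hA.exists_eigenvector
  exact hB.exists_mulVec_eq_neg hA hj hw hAw

end SpinSpectrum

theorem inv_sub_div_mul_nonneg_iff {j r d : ℝ} (hd : d = 2 * j + 1) (hj : 0 ≤ j) (hr : 0 ≤ r)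
    (hrj : r ^ 2 ≤ j ^ 2) : 0 ≤ d⁻¹ - r / (j * (j + 1) * d / 3) * j ↔ r ^ 2 ≤ (j + 1) ^ 2 / 9 := by
  subst hd
  rcases hj.eq_or_lt with rfl | hj
  · have : r = 0 := by nlinarith
    subst this
    norm_num
  · have key : (2 * j + 1)⁻¹ - r / (j * (j + 1) * (2 * j + 1) / 3) * j
        = (j + 1 - 3 * r) / ((j + 1) * (2 * j + 1)) := by
      field_simp
    rw [key, le_div_iff₀ (by positivity), zero_mul, sub_nonneg,
      show (j + 1) ^ 2 / 9 = ((j + 1) / 3) ^ 2 by ring, sq_le_sq₀ hr (by positivity)]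
    constructor <;> intro h <;> linarith

theorem rho_fix_posSemidef_iff_general (ℓ : ℕ) (L : Fin 3 → Matrix (Fin (ℓ + 1)) (Fin (ℓ + 1)) ℂ)
    (herm : ∀ k, (L k).IsHermitian)
    (comm : ∀ k l, L k * L l - L l * L k =
      Complex.I • ∑ m, (leviCivita k l m : ℂ) • L m)
    (casimir : ∑ k, L k * L k
      = ((((ℓ : ℝ) / 2) * ((ℓ : ℝ) / 2 + 1) : ℝ) : ℂ) • (1 : Matrix (Fin (ℓ + 1)) (Fin (ℓ + 1)) ℂ))
    (v : Fin 3 → ℝ) (hv : ∑ k, (v k) ^ 2 ≤ ((ℓ : ℝ) / 2) ^ 2) :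
    ((((ℓ : ℝ) + 1 : ℝ) : ℂ)⁻¹ • (1 : Matrix (Fin (ℓ + 1)) (Fin (ℓ + 1)) ℂ)
        + ∑ k, ((v k / (((ℓ : ℝ) / 2) * ((ℓ : ℝ) / 2 + 1) * ((ℓ : ℝ) + 1) / 3) : ℝ) : ℂ) • L k).PosSemidef
      ↔ ∑ k, (v k) ^ 2 ≤ ((ℓ : ℝ) / 2 + 1) ^ 2 / 9 := by
  set j : ℝ := (ℓ : ℝ) / 2
  set t : ℝ := j * (j + 1) * ((ℓ : ℝ) + 1) / 3
  have hj : 0 ≤ j := by positivity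
  obtain ⟨n, hn, hvn⟩ := exists_dotProduct_self_eq_one_and_eq_sqrt_smul v
  have hr2 : ∑ k, v k ^ 2 = √(v ⬝ᵥ v) ^ 2 := by
    have hvv : 0 ≤ v ⬝ᵥ v := Finset.sum_nonneg fun k _ => mul_self_nonneg (v k)
    rw [Real.sq_sqrt hvv]
    simp only [dotProduct, sq]
  set r := √(v ⬝ᵥ v)
  have hsum : ∑ k, ((v k / t : ℝ) : ℂ) • L k = ((r / t : ℝ) : ℂ) • spinAlong L n := by
    rw [spinAlong, Finset.smul_sum]
    refine Finset.sum_congr rfl fun k _ => ?_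
    rw [smul_smul, ← Complex.ofReal_mul, hvn]
    simp only [Pi.smul_apply, smul_eq_mul]
    ring_nf
  obtain ⟨w, hw, hAw⟩ := exists_spinAlong_mulVec_eq_neg herm comm hj casimir hn
  rw [hsum, ← Complex.ofReal_inv, posSemidef_smul_one_add_smul_iff
    (posSemidef_spinAlong_add_smul_one herm comm hj casimir hn) hw hAw (by positivity), hr2]
  rw [hr2] at hv
  exact inv_sub_div_mul_nonneg_iff (by ring) hj (Real.sqrt_nonneg _) hv

/-- Let `L₁,L₂,L₃ ∈ ℝ` with `∑ L_k² ≤ j²` (here `j = ℓ/2`, dimension `d = ℓ+1 = 2j+1`).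
The fixed-part operator `ρ_fix = 𝟙/(2j+1) + ∑_k a_k L_k^{(j)}` with
`a_k = L_k / tr((L_k^{(j)})²)` and `tr((L_k^{(j)})²) = j(j+1)(2j+1)/3` is positive
semidefinite if and only if `∑ L_k² ≤ (j+1)²/9`. -/
theorem rho_fix_posSemidef_iff (ℓ : ℕ) (L : Fin 3 → Matrix (Fin (ℓ + 1)) (Fin (ℓ + 1)) ℂ)
    (herm : ∀ k, (L k).IsHermitian)
    (comm : ∀ k l, L k * L l - L l * L k =
      Complex.I • ∑ m, (leviCivita k l m : ℂ) • L m)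
    (casimir : ∑ k, L k * L k
      = ((((ℓ : ℝ) / 2) * ((ℓ : ℝ) / 2 + 1) : ℝ) : ℂ) • (1 : Matrix (Fin (ℓ + 1)) (Fin (ℓ + 1)) ℂ))
    (irred : ∀ X : Matrix (Fin (ℓ + 1)) (Fin (ℓ + 1)) ℂ,
      (∀ k, X * L k = L k * X) → ∃ c : ℂ, X = c • (1 : Matrix (Fin (ℓ + 1)) (Fin (ℓ + 1)) ℂ))
    (htr2 : ∀ k, (L k * L k).trace
      = ((((ℓ : ℝ) / 2) * ((ℓ : ℝ) / 2 + 1) * ((ℓ : ℝ) + 1) / 3 : ℝ) : ℂ))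
    (v : Fin 3 → ℝ) (hv : ∑ k, (v k) ^ 2 ≤ ((ℓ : ℝ) / 2) ^ 2) :
    ((((ℓ : ℝ) + 1 : ℝ) : ℂ)⁻¹ • (1 : Matrix (Fin (ℓ + 1)) (Fin (ℓ + 1)) ℂ)
        + ∑ k, ((v k / (((ℓ : ℝ) / 2) * ((ℓ : ℝ) / 2 + 1) * ((ℓ : ℝ) + 1) / 3) : ℝ) : ℂ) • L k).PosSemidef
      ↔ ∑ k, (v k) ^ 2 ≤ ((ℓ : ℝ) / 2 + 1) ^ 2 / 9 :=
  rho_fix_posSemidef_iff_general ℓ L herm comm casimir v hv
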